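/- Let u be a drift function and α ∈ ℝ₊*. Then for every f ∈ 𝓔¹_u and every x ∈ 𝐗 with u(x) < ∞, the series Σ_{k≥0} 𝔼_x|f(X_k)|/(k+1)^{1+α} is finite; consequently f(X_n)/n^{1+α} → 0 as n → ∞, both ℙ_x-almost everywhere and in L¹(ℙ_x). -/

import Mathlib

open MeasureTheory Filter Set Topology
open scoped ENNReal NNReal ENat

noncomputable section

/-- The shift on path space. -/
def pshift {X : Type*} (ω : ℕ → X) : ℕ → X := fun n => ω (n + 1)

/-- The natural filtration on path space: the σ-algebra generated by the first `n+1`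
coordinates. -/
def pathFiltration (X : Type*) [MeasurableSpace X] (n : ℕ) : MeasurableSpace (ℕ → X) :=
  MeasurableSpace.comap (fun ω (i : Fin (n + 1)) => ω (i : ℕ)) inferInstance

/-- A Markov chain on `X`, given by the family of its path-space laws `ℙ_x`. -/
structure MarkovChain (X : Type*) [MeasurableSpace X] where
  law : X → Measure (ℕ → X)
  prob : ∀ x, IsProbabilityMeasure (law x)
  meas_law : Measurable law
  start : ∀ x, (law x).map (fun ω => ω 0) = Measure.dirac x
  markov : ∀ (x : X) (n : ℕ) (A : Set (ℕ → X)),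
      MeasurableSet[pathFiltration X n] A → ∀ g : (ℕ → X) → ℝ≥0∞, Measurable g →
      ∫⁻ ω in A, g (fun k => ω (k + n)) ∂law x = ∫⁻ ω in A, ∫⁻ η, g η ∂law (ω n) ∂law x

variable {X : Type*} [MeasurableSpace X]

/-- A stopping time on path space, with values in `ℕ∞`. -/
def IsPathStoppingTime (τ : (ℕ → X) → ℕ∞) : Prop :=
  ∀ n : ℕ, MeasurableSet[pathFiltration X n] {ω | τ ω = (n : ℕ∞)}

/-- `τ` is θ-compatible: `ℙ_x(τ = 0) = 0` and, almost everywhere, `τ ≥ 2` implies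
`τ ∘ θ = τ - 1`. -/
def ThetaCompatible (M : MarkovChain X) (τ : (ℕ → X) → ℕ∞) : Prop :=
  (∀ x, M.law x {ω | τ ω = 0} = 0) ∧
    ∀ x, ∀ᵐ ω ∂M.law x, 2 ≤ τ ω → τ (pshift ω) = τ ω - 1

/-- The Markov operator `P` on nonnegative functions: `Pf(x) = 𝔼_x f(X_1)`. -/
def Pop (M : MarkovChain X) (f : X → ℝ≥0∞) (x : X) : ℝ≥0∞ := ∫⁻ ω, f (ω 1) ∂M.law x

/-- The induced operator `Q`: `Qg(x) = ∫_{τ<∞} g(X_τ) dℙ_x`. -/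
def Qop (M : MarkovChain X) (τ : (ℕ → X) → ℕ∞) (g : X → ℝ≥0∞) (x : X) : ℝ≥0∞ :=
  ∫⁻ ω in {ω | τ ω ≠ ⊤}, g (ω (τ ω).toNat) ∂M.law x

/-- The operator `S`: `Sf(x) = ∫_{τ=1} f(X_1) dℙ_x`. -/
def Sop (M : MarkovChain X) (τ : (ℕ → X) → ℕ∞) (f : X → ℝ≥0∞) (x : X) : ℝ≥0∞ :=
  ∫⁻ ω in {ω | τ ω = 1}, f (ω 1) ∂M.law x

/-- The operator `R`: `Rf(x) = ∫_{τ<∞} (f(X_0) + ⋯ + f(X_{τ-1})) dℙ_x`. -/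
def Rop (M : MarkovChain X) (τ : (ℕ → X) → ℕ∞) (f : X → ℝ≥0∞) (x : X) : ℝ≥0∞ :=
  ∫⁻ ω in {ω | τ ω ≠ ⊤}, ∑ k ∈ Finset.range (τ ω).toNat, f (ω k) ∂M.law x

/-- `𝔼_x τ`, with values in `[0,∞]`. -/
def EtauE (M : MarkovChain X) (τ : (ℕ → X) → ℕ∞) (x : X) : ℝ≥0∞ :=
  ∫⁻ ω, (τ ω : ℝ≥0∞) ∂M.law x

/-- `μ` is `P`-invariant: `∫ Pf dμ = ∫ f dμ` for every bounded nonnegative borelian `f`. -/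
def PInvariant (M : MarkovChain X) (μ : Measure X) : Prop :=
  ∀ f : X → ℝ≥0∞, Measurable f → (∃ C : ℝ≥0∞, C ≠ ⊤ ∧ ∀ x, f x ≤ C) →
    ∫⁻ x, Pop M f x ∂μ = ∫⁻ x, f x ∂μ

/-- `ν` is `Q`-invariant: `∫ Qf dν = ∫ f dν` for every bounded nonnegative borelian `f`. -/
def QInvariant (M : MarkovChain X) (τ : (ℕ → X) → ℕ∞) (ν : Measure X) : Prop :=
  ∀ f : X → ℝ≥0∞, Measurable f → (∃ C : ℝ≥0∞, C ≠ ⊤ ∧ ∀ x, f x ≤ C) →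
    ∫⁻ x, Qop M τ f x ∂ν = ∫⁻ x, f x ∂ν

/-- `ν = S*μ`, i.e. `ν(A) = ∫ S𝟙_A dμ` for every borelian `A`. -/
def SstarEq (M : MarkovChain X) (τ : (ℕ → X) → ℕ∞) (μ ν : Measure X) : Prop :=
  ∀ A : Set X, MeasurableSet A → ν A = ∫⁻ x, Sop M τ (A.indicator 1) x ∂μ

/-- `m = R*ν`, i.e. `m(A) = ∫ R𝟙_A dν` for every borelian `A`. -/
def RstarEq (M : MarkovChain X) (τ : (ℕ → X) → ℕ∞) (ν m : Measure X) : Prop :=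
  ∀ A : Set X, MeasurableSet A → m A = ∫⁻ x, Rop M τ (A.indicator 1) x ∂ν

/-- the real-valued Markov operator -/
def Pr (M : MarkovChain X) (f : X → ℝ) (x : X) : ℝ := ∫ ω, f (ω 1) ∂M.law x

/-- the real-valued induced operator -/
def Qr (M : MarkovChain X) (τ : (ℕ → X) → ℕ∞) (g : X → ℝ) (x : X) : ℝ :=
  ∫ ω in {ω | τ ω ≠ ⊤}, g (ω (τ ω).toNat) ∂M.law x

/-- the real-valued operator `S` -/
def Sr (M : MarkovChain X) (τ : (ℕ → X) → ℕ∞) (f : X → ℝ) (x : X) : ℝ :=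
  ∫ ω in {ω | τ ω = 1}, f (ω 1) ∂M.law x

/-- the real-valued operator `R` -/
def Rr (M : MarkovChain X) (τ : (ℕ → X) → ℕ∞) (f : X → ℝ) (x : X) : ℝ :=
  ∫ ω in {ω | τ ω ≠ ⊤}, ∑ k ∈ Finset.range (τ ω).toNat, f (ω k) ∂M.law x

/-- `𝔼_x τ` as a real number. -/
def Etau (M : MarkovChain X) (τ : (ℕ → X) → ℕ∞) (x : X) : ℝ := (EtauE M τ x).toReal

/-- `B_u = sup (Pu - u) + 1`. -/
def Bu (M : MarkovChain X) (u : X → ℝ) : ℝ :=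
  sSup (Set.range fun x => Pr M u x - u x) + 1

/-- the weight `u - Pu + B_u` defining the space `𝓔_u`. -/
def wE (M : MarkovChain X) (u : X → ℝ) : X → ℝ := fun x => u x - Pr M u x + Bu M u

/-- `u` is a drift function: `u ≥ 1`, `u - Pu` is bounded below and, with
`B_u = sup (Pu - u) + 1`, the functions `Qu`, `𝔼τ/u` and `P(u-Pu+B_u)/(u-Pu+B_u)` are
bounded. -/
structure IsDrift (M : MarkovChain X) (τ : (ℕ → X) → ℕ∞) (u : X → ℝ) : Prop where
  meas : Measurable u
  one_le : ∀ x, 1 ≤ u x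
  int_one : ∀ x, Integrable (fun ω => u (ω 1)) (M.law x)
  bdd : BddAbove (Set.range fun x => Pr M u x - u x)
  etau_ne_top : ∀ x, EtauE M τ x ≠ ⊤
  qu_bdd : ∃ C : ℝ, ∀ x, Qr M τ u x ≤ C
  etau_div_bdd : ∃ C : ℝ, ∀ x, Etau M τ x ≤ C * u x
  pw_bdd : ∃ C : ℝ, ∀ x, Pr M (wE M u) x ≤ C * wE M u x

/-- membership in the weighted space `𝓕^p_v` : `f` is borelian and `|f| ≤ C v^{1/p}`. -/
def MemWp (v : X → ℝ) (p : ℝ) (f : X → ℝ) : Prop :=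
  Measurable f ∧ ∃ C : ℝ, ∀ x, |f x| ≤ C * v x ^ (1 / p)

/-- the norm of the weighted space `𝓕^p_v` : `‖f‖ = sup_x |f(x)|/v(x)^{1/p}`. -/
def normWp (v : X → ℝ) (p : ℝ) (f : X → ℝ) : ℝ := ⨆ x, |f x| / v x ^ (1 / p)

/-- ergodicity among a class of invariant measures: a finite nonzero invariant measure is
ergodic if it is not a nontrivial convex combination of two distinct invariant probability
measures. -/
def ErgodicAmong (Inv : Measure X → Prop) (μ : Measure X) : Prop :=
  μ ≠ 0 ∧ ∀ (ν₁ ν₂ : Measure X) (t : ℝ≥0∞), Inv ν₁ → Inv ν₂ →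
    IsProbabilityMeasure ν₁ → IsProbabilityMeasure ν₂ → 0 < t → t < 1 →
    μ = μ Set.univ • (t • ν₁ + (1 - t) • ν₂) → ν₁ = ν₂

/-!
Write `w = u - Pu + B_u`. Since `w + Pu = u + B_u` and `𝔼_x Pu(X_k) = 𝔼_x u(X_{k+1})` by the
Markov property, `𝔼_x w(X_k) + 𝔼_x u(X_{k+1}) ≤ 𝔼_x u(X_k) + B_u`; telescoping, the partial sums
`∑_{k<n} 𝔼_x |f(X_k)| ≤ ‖f‖ ∑_{k<n} 𝔼_x w(X_k)` grow at most linearly in `n`. Abel summation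
against the decreasing weights `(k+1)^{-(1+α)}`, whose increments are controlled by Bernoulli's
inequality, makes the series converge. Its terms then tend to zero, which is the `L¹` statement,
and by monotone convergence `∑_k |f(X_k)|/(k+1)^{1+α}` is almost surely finite, which gives the
almost sure statement.
-/

theorem Real.inv_rpow_sub_inv_add_one_rpow_le {b p : ℝ} (hb : 0 < b) (hp : 1 ≤ p) :
    (b ^ p)⁻¹ - ((b + 1) ^ p)⁻¹ ≤ p / (b + 1) * (b ^ p)⁻¹ := by
  have hb1 : 0 < b + 1 := by linarith
  have hbp : 0 < b ^ p := Real.rpow_pos_of_pos hb p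
  have hs : -1 ≤ -(b + 1)⁻¹ := neg_le_neg (inv_le_one_of_one_le₀ (by linarith))
  have bernoulli := one_add_mul_self_le_rpow_one_add hs hp
  rw [show 1 + -(b + 1)⁻¹ = b / (b + 1) by field_simp; ring,
    Real.div_rpow hb.le hb1.le] at bernoulli
  calc (b ^ p)⁻¹ - ((b + 1) ^ p)⁻¹ = (b ^ p)⁻¹ * (1 - b ^ p / (b + 1) ^ p) := by field_simp
    _ ≤ (b ^ p)⁻¹ * (p / (b + 1)) := by gcongr; linarith [div_eq_mul_inv p (b + 1)]
    _ = p / (b + 1) * (b ^ p)⁻¹ := mul_comm _ _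

theorem summable_div_rpow_of_sum_range_le {e : ℕ → ℝ} {A p : ℝ} (hp : 1 < p)
    (he : ∀ k, 0 ≤ e k) (hE : ∀ n, ∑ k ∈ Finset.range n, e k ≤ A * (n + 1)) :
    Summable fun k : ℕ => e k / ((k : ℝ) + 1) ^ p := by
  set a : ℕ → ℝ := fun k => (((k : ℝ) + 1) ^ p)⁻¹
  set E : ℕ → ℝ := fun n => ∑ k ∈ Finset.range n, e k
  have hA : 0 ≤ A := by simpa using hE 0
  have ha_pos : ∀ k, 0 < a k := fun k => inv_pos.2 (Real.rpow_pos_of_pos (by positivity) p)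
  have ha_summable : Summable a := by
    simpa [a] using (summable_nat_add_iff 1).2 (Real.summable_nat_rpow_inv.2 hp)
  have abel : ∀ n, ∑ k ∈ Finset.range n, e k * a k
      = E n * a n + ∑ k ∈ Finset.range n, E (k + 1) * (a k - a (k + 1)) := by
    intro n
    induction n with
    | zero => simp [E]
    | succ n ih =>
      rw [Finset.sum_range_succ, ih, Finset.sum_range_succ, show E (n + 1) = E n + e n from
        Finset.sum_range_succ _ _]
      ring
  have last_le : ∀ n, E n * a n ≤ A := fun n => by
    have hn : (n : ℝ) + 1 ≤ ((n : ℝ) + 1) ^ p :=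
      Real.self_le_rpow_of_one_le (by linarith [n.cast_nonneg (α := ℝ)]) hp.le
    calc E n * a n ≤ A * (n + 1) * a n := mul_le_mul_of_nonneg_right (hE n) (ha_pos n).le
      _ ≤ A * ((n : ℝ) + 1) ^ p * a n :=
        mul_le_mul_of_nonneg_right (mul_le_mul_of_nonneg_left hn hA) (ha_pos n).le
      _ = A := by simp only [a]; field_simp
  have step_le : ∀ k, E (k + 1) * (a k - a (k + 1)) ≤ A * p * a k := fun k => by
    have hdiff : a k - a (k + 1) ≤ p / ((k : ℝ) + 2) * a k := by
      have h := Real.inv_rpow_sub_inv_add_one_rpow_le (b := (k : ℝ) + 1) (by positivity) hp.le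
      simp only [a]; push_cast; ring_nf at h ⊢; exact h
    have hdiff_nonneg : 0 ≤ a k - a (k + 1) := sub_nonneg.2 <| inv_anti₀ (by positivity) <|
      Real.rpow_le_rpow (by positivity) (by push_cast; linarith) (by linarith)
    calc E (k + 1) * (a k - a (k + 1)) ≤ A * ((k : ℝ) + 2) * (p / ((k : ℝ) + 2) * a k) := by
          refine mul_le_mul ?_ hdiff hdiff_nonneg (by positivity)
          have := hE (k + 1); push_cast at this; linarith
      _ = A * p * a k := by field_simp
  refine summable_of_sum_range_le (c := A + A * p * ∑' k, a k)
    (fun k => div_nonneg (he k) (by positivity)) fun n => ?_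
  calc ∑ k ∈ Finset.range n, e k / ((k : ℝ) + 1) ^ p
      = E n * a n + ∑ k ∈ Finset.range n, E (k + 1) * (a k - a (k + 1)) := by
        rw [← abel]; exact Finset.sum_congr rfl fun k _ => div_eq_mul_inv _ _
    _ ≤ A + ∑ k ∈ Finset.range n, A * p * a k :=
        add_le_add (last_le n) (Finset.sum_le_sum fun k _ => step_le k)
    _ ≤ A + A * p * ∑' k, a k := by
      rw [← Finset.mul_sum]
      gcongr
      exact ha_summable.sum_le_tsum _ fun k _ => (ha_pos k).le

theorem ENNReal.tsum_div_rpow_ne_top_of_sum_range_le {ν : ℕ → ℝ≥0∞} {a b : ℝ≥0∞} {p : ℝ}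
    (hp : 1 < p) (ha : a ≠ ⊤) (hb : b ≠ ⊤) (h : ∀ n, ∑ k ∈ Finset.range n, ν k ≤ a + n * b) :
    ∑' k : ℕ, ν k / ENNReal.ofReal (((k : ℝ) + 1) ^ p) ≠ ⊤ := by
  have hν : ∀ k, ν k ≠ ⊤ := fun k => ne_top_of_le_ne_top (by finiteness)
    ((Finset.single_le_sum (fun j _ => zero_le) (Finset.self_mem_range_succ k)).trans (h (k + 1)))
  have hsum : ∀ n, ∑ k ∈ Finset.range n, (ν k).toReal ≤ (a + b).toReal * (n + 1) := fun n => by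
    have hab : a + n * b ≤ (a + b) * (n + 1) := by
      rw [add_mul, mul_add_one, mul_comm b]
      gcongr
      · exact le_add_of_nonneg_left zero_le
      · exact le_self_add
    rw [← ENNReal.toReal_sum fun k _ => hν k]
    calc (∑ k ∈ Finset.range n, ν k).toReal ≤ ((a + b) * (n + 1)).toReal :=
          ENNReal.toReal_mono (by finiteness) ((h n).trans hab)
      _ = (a + b).toReal * (n + 1) := by
        rw [ENNReal.toReal_mul]; norm_cast
  have hterm : ∀ k : ℕ, ν k / ENNReal.ofReal (((k : ℝ) + 1) ^ p)
      = ENNReal.ofReal ((ν k).toReal / ((k : ℝ) + 1) ^ p) := fun k => by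
    rw [ENNReal.ofReal_div_of_pos (by positivity), ENNReal.ofReal_toReal (hν k)]
  rw [tsum_congr hterm, ← ENNReal.ofReal_tsum_of_nonneg (fun k => by positivity)
    (summable_div_rpow_of_sum_range_le hp (fun k => ENNReal.toReal_nonneg) hsum)]
  exact ENNReal.ofReal_ne_top

theorem tendsto_toReal_div_rpow_of_tendsto_div_add_one_rpow {ν : ℕ → ℝ≥0∞} {p : ℝ}
    (h : Tendsto (fun n : ℕ => ν n / ENNReal.ofReal (((n : ℝ) + 1) ^ p)) atTop (𝓝 0)) :
    Tendsto (fun n : ℕ => (ν n).toReal / (n : ℝ) ^ p) atTop (𝓝 0) := by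
  have hreal : Tendsto (fun n : ℕ => (ν n).toReal / ((n : ℝ) + 1) ^ p) atTop (𝓝 0) := by
    have hc : ∀ n : ℕ, 0 ≤ ((n : ℝ) + 1) ^ p := fun n => by positivity
    have := (ENNReal.tendsto_toReal ENNReal.zero_ne_top).comp h
    simpa only [Function.comp_def, ENNReal.toReal_div, ENNReal.toReal_zero,
      ENNReal.toReal_ofReal (hc _)] using this
  have hratio : Tendsto (fun n : ℕ => ((n : ℝ) / (n + 1)) ^ p) atTop (𝓝 1) := by
    simpa using (tendsto_natCast_div_add_atTop (1 : ℝ)).rpow_const (Or.inl one_ne_zero)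
  have hquot := hreal.div hratio one_ne_zero
  rw [zero_div] at hquot
  refine hquot.congr' ?_
  filter_upwards [eventually_ge_atTop 1] with n hn
  have hn0 : (0 : ℝ) < n := by exact_mod_cast hn
  simp only [Pi.div_apply, Real.div_rpow hn0.le (by positivity : (0 : ℝ) ≤ n + 1)]
  field_simp

theorem ae_tendsto_zero_of_tsum_lintegral_ne_top {Ω : Type*} [MeasurableSpace Ω] {μ : Measure Ω}
    {g : ℕ → Ω → ℝ≥0∞} (hg : ∀ k, AEMeasurable (g k) μ) (h : ∑' k, ∫⁻ ω, g k ω ∂μ ≠ ⊤) :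
    ∀ᵐ ω ∂μ, Tendsto (fun k => g k ω) atTop (𝓝 0) := by
  rw [← lintegral_tsum hg] at h
  filter_upwards [ae_lt_top' (AEMeasurable.tsum hg) h] with ω hω
  exact ENNReal.tendsto_atTop_zero_of_tsum_ne_top hω.ne

theorem Finset.sum_range_add_le_of_add_le {α : Type*} [AddCommMonoid α] [PartialOrder α]
    [IsOrderedAddMonoid α] {W U : ℕ → α} {b : α} (h : ∀ n, W n + U (n + 1) ≤ U n + b) (n : ℕ) :
    ∑ k ∈ Finset.range n, W k + U n ≤ U 0 + n • b := by
  induction n with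
  | zero => simp
  | succ n ih =>
    calc ∑ k ∈ Finset.range (n + 1), W k + U (n + 1)
        = ∑ k ∈ Finset.range n, W k + (W n + U (n + 1)) := by
          rw [Finset.sum_range_succ, add_assoc]
      _ ≤ ∑ k ∈ Finset.range n, W k + (U n + b) := add_le_add le_rfl (h n)
      _ = ∑ k ∈ Finset.range n, W k + U n + b := (add_assoc _ _ _).symm
      _ ≤ U 0 + n • b + b := by gcongr
      _ = U 0 + (n + 1) • b := by rw [succ_nsmul, add_assoc]

namespace MarkovChain

variable (M : MarkovChain X)

theorem lintegral_comp_zero (x : X) {g : X → ℝ≥0∞} (hg : Measurable g) :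
    ∫⁻ ω, g (ω 0) ∂M.law x = g x := by
  rw [← lintegral_map hg (measurable_pi_apply 0), M.start x, lintegral_dirac' _ hg]

theorem lintegral_comp_succ (x : X) (n : ℕ) {g : X → ℝ≥0∞} (hg : Measurable g) :
    ∫⁻ ω, g (ω (n + 1)) ∂M.law x = ∫⁻ ω, Pop M g (ω n) ∂M.law x := by
  have h := M.markov x n Set.univ MeasurableSet.univ (fun η => g (η 1))
    (hg.comp (measurable_pi_apply 1))
  simp only [Measure.restrict_univ, Nat.add_comm 1 n] at h
  exact h

theorem ofReal_Pr_eq_Pop {u : X → ℝ} (hu : ∀ x, Integrable (fun ω => u (ω 1)) (M.law x))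
    (hu0 : ∀ y, 0 ≤ u y) (x : X) :
    ENNReal.ofReal (Pr M u x) = Pop M (fun y => ENNReal.ofReal (u y)) x :=
  ofReal_integral_eq_lintegral_ofReal (hu x) (Eventually.of_forall fun ω => hu0 (ω 1))

end MarkovChain

namespace IsDrift

variable {M : MarkovChain X} {τ : (ℕ → X) → ℕ∞} {u : X → ℝ}

theorem nonneg (hu : IsDrift M τ u) (x : X) : 0 ≤ u x := zero_le_one.trans (hu.one_le x)

theorem Pr_nonneg (hu : IsDrift M τ u) (x : X) : 0 ≤ Pr M u x :=
  integral_nonneg fun ω => hu.nonneg (ω 1)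

theorem one_le_wE (hu : IsDrift M τ u) (x : X) : 1 ≤ wE M u x := by
  have := le_csSup hu.bdd ⟨x, rfl⟩
  simp only [wE, Bu]
  linarith

theorem lintegral_wE_add_le (hu : IsDrift M τ u) (x : X) (n : ℕ) :
    ∫⁻ ω, ENNReal.ofReal (wE M u (ω n)) ∂M.law x + ∫⁻ ω, ENNReal.ofReal (u (ω (n + 1))) ∂M.law x
      ≤ ∫⁻ ω, ENNReal.ofReal (u (ω n)) ∂M.law x + ENNReal.ofReal (Bu M u) := by
  have : IsProbabilityMeasure (M.law x) := M.prob x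
  have pointwise : ∀ y, ENNReal.ofReal (wE M u y) + ENNReal.ofReal (Pr M u y)
      ≤ ENNReal.ofReal (u y) + ENNReal.ofReal (Bu M u) := fun y => by
    rw [← ENNReal.ofReal_add (zero_le_one.trans (hu.one_le_wE y)) (hu.Pr_nonneg y)]
    exact (ENNReal.ofReal_le_ofReal (by simp only [wE]; linarith)).trans ENNReal.ofReal_add_le
  rw [M.lintegral_comp_succ x n hu.meas.ennreal_ofReal]
  simp_rw [← M.ofReal_Pr_eq_Pop hu.int_one hu.nonneg]
  calc _ ≤ ∫⁻ ω, ENNReal.ofReal (wE M u (ω n)) + ENNReal.ofReal (Pr M u (ω n)) ∂M.law x :=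
        le_lintegral_add _ _
    _ ≤ ∫⁻ ω, ENNReal.ofReal (u (ω n)) + ENNReal.ofReal (Bu M u) ∂M.law x :=
        lintegral_mono fun ω => pointwise (ω n)
    _ = _ := by rw [lintegral_add_right _ measurable_const, lintegral_const, measure_univ, mul_one]

theorem sum_lintegral_wE_le (hu : IsDrift M τ u) (x : X) (n : ℕ) :
    ∑ k ∈ Finset.range n, ∫⁻ ω, ENNReal.ofReal (wE M u (ω k)) ∂M.law x
      ≤ ENNReal.ofReal (u x) + n * ENNReal.ofReal (Bu M u) := by
  have h := Finset.sum_range_add_le_of_add_le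
    (U := fun k => ∫⁻ ω, ENNReal.ofReal (u (ω k)) ∂M.law x) (hu.lintegral_wE_add_le x) n
  rw [M.lintegral_comp_zero x hu.meas.ennreal_ofReal, nsmul_eq_mul] at h
  exact le_self_add.trans h

theorem sum_lintegral_abs_le {f : X → ℝ} (hu : IsDrift M τ u) (hf : MemWp (wE M u) 1 f)
    (x : X) : ∃ C : ℝ≥0∞, C ≠ ⊤ ∧ ∀ n, ∑ k ∈ Finset.range n, ∫⁻ ω, ENNReal.ofReal |f (ω k)| ∂M.law x
      ≤ C * ENNReal.ofReal (u x) + n * (C * ENNReal.ofReal (Bu M u)) := by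
  obtain ⟨C, hC⟩ := hf.2
  refine ⟨ENNReal.ofReal C, ENNReal.ofReal_ne_top, fun n => ?_⟩
  have hfw : ∀ y, ENNReal.ofReal |f y| ≤ ENNReal.ofReal C * ENNReal.ofReal (wE M u y) := by
    intro y
    rw [← ENNReal.ofReal_mul' (zero_le_one.trans (hu.one_le_wE y))]
    exact ENNReal.ofReal_le_ofReal (by simpa using hC y)
  calc ∑ k ∈ Finset.range n, ∫⁻ ω, ENNReal.ofReal |f (ω k)| ∂M.law x
      ≤ ∑ k ∈ Finset.range n, ENNReal.ofReal C * ∫⁻ ω, ENNReal.ofReal (wE M u (ω k)) ∂M.law x :=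
        Finset.sum_le_sum fun k _ => (lintegral_mono fun (ω : ℕ → X) => hfw (ω k)).trans_eq
          (lintegral_const_mul' _ _ ENNReal.ofReal_ne_top)
    _ ≤ ENNReal.ofReal C * (ENNReal.ofReal (u x) + n * ENNReal.ofReal (Bu M u)) := by
        rw [← Finset.mul_sum]; gcongr; exact hu.sum_lintegral_wE_le x n
    _ = _ := by ring

end IsDrift

section DivRpow

variable {Ω : Type*} [MeasurableSpace Ω] {μ : Measure Ω} {F : ℕ → Ω → ℝ} {p : ℝ}

theorem abs_div_natCast_rpow (r : ℝ) (n : ℕ) : |r / (n : ℝ) ^ p| = |r| / (n : ℝ) ^ p := by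
  rw [abs_div, abs_of_nonneg (Real.rpow_nonneg n.cast_nonneg _)]

theorem ae_tendsto_div_rpow_of_tsum_lintegral_ne_top (hF : ∀ k, Measurable (F k))
    (h : ∑' k : ℕ, (∫⁻ ω, ENNReal.ofReal |F k ω| ∂μ) / ENNReal.ofReal (((k : ℝ) + 1) ^ p) ≠ ⊤) :
    ∀ᵐ ω ∂μ, Tendsto (fun n : ℕ => F n ω / (n : ℝ) ^ p) atTop (𝓝 0) := by
  have hmeas : ∀ k, Measurable fun ω => ENNReal.ofReal |F k ω| := fun k =>
    (hF k).abs.ennreal_ofReal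
  have hlintegral : ∀ k : ℕ, ∫⁻ ω, ENNReal.ofReal |F k ω| / ENNReal.ofReal (((k : ℝ) + 1) ^ p) ∂μ
      = (∫⁻ ω, ENNReal.ofReal |F k ω| ∂μ) / ENNReal.ofReal (((k : ℝ) + 1) ^ p) := fun k => by
    simp only [div_eq_mul_inv, lintegral_mul_const _ (hmeas k)]
  have hmeas_div : ∀ k : ℕ,
      AEMeasurable (fun ω => ENNReal.ofReal |F k ω| / ENNReal.ofReal (((k : ℝ) + 1) ^ p)) μ :=
    fun k => ((hmeas k).div_const _).aemeasurable
  filter_upwards [ae_tendsto_zero_of_tsum_lintegral_ne_top hmeas_div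
    (by simpa only [hlintegral] using h)] with ω hω
  rw [tendsto_zero_iff_abs_tendsto_zero]
  simpa only [Function.comp_def, abs_div_natCast_rpow, ENNReal.toReal_ofReal (abs_nonneg _)] using
    tendsto_toReal_div_rpow_of_tendsto_div_add_one_rpow hω

theorem tendsto_integral_abs_div_rpow_of_tsum_lintegral_ne_top (hF : ∀ k, Measurable (F k))
    (h : ∑' k : ℕ, (∫⁻ ω, ENNReal.ofReal |F k ω| ∂μ) / ENNReal.ofReal (((k : ℝ) + 1) ^ p) ≠ ⊤) :
    Tendsto (fun n : ℕ => ∫ ω, |F n ω / (n : ℝ) ^ p| ∂μ) atTop (𝓝 0) := by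
  have hintegral : ∀ n : ℕ, ∫ ω, |F n ω / (n : ℝ) ^ p| ∂μ
      = (∫⁻ ω, ENNReal.ofReal |F n ω| ∂μ).toReal / (n : ℝ) ^ p := fun n => by
    simp only [abs_div_natCast_rpow]
    rw [integral_div, integral_eq_lintegral_of_nonneg_ae
      (Eventually.of_forall fun ω => abs_nonneg _) (hF n).abs.aestronglyMeasurable]
  simpa only [hintegral] using tendsto_toReal_div_rpow_of_tendsto_div_add_one_rpow
    (ENNReal.tendsto_atTop_zero_of_tsum_ne_top h)

end DivRpow

theorem stmt11_general (M : MarkovChain X) (τ : (ℕ → X) → ℕ∞)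
    (u : X → ℝ) (hu : IsDrift M τ u) (α : ℝ) (hα : 0 < α)
    (f : X → ℝ) (hf : MemWp (wE M u) 1 f) (x : X) :
    (∑' k : ℕ, (∫⁻ ω, ENNReal.ofReal |f (ω k)| ∂M.law x) /
        ENNReal.ofReal (((k : ℝ) + 1) ^ (1 + α))) ≠ ⊤ ∧
    (∀ᵐ ω ∂M.law x,
      Tendsto (fun n : ℕ => f (ω n) / (n : ℝ) ^ (1 + α)) atTop (𝓝 0)) ∧
    Tendsto (fun n : ℕ => ∫ ω, |f (ω n) / (n : ℝ) ^ (1 + α)| ∂M.law x) atTop (𝓝 0) := by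
  obtain ⟨C, hC, hsum⟩ := hu.sum_lintegral_abs_le hf x
  have hseries := ENNReal.tsum_div_rpow_ne_top_of_sum_range_le (p := 1 + α) (by linarith)
    (by finiteness) (by finiteness) hsum
  have hmeas : ∀ k, Measurable fun ω : ℕ → X => f (ω k) := fun k =>
    hf.1.comp (measurable_pi_apply k)
  exact ⟨hseries, ae_tendsto_div_rpow_of_tsum_lintegral_ne_top hmeas hseries,
    tendsto_integral_abs_div_rpow_of_tsum_lintegral_ne_top hmeas hseries⟩

/-- Lemma 3.2: for a drift function `u`, `α > 0`, `f ∈ 𝓔¹_u` and any `x`, the series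
`∑_k 𝔼_x|f(X_k)|/(k+1)^{1+α}` is finite, and `f(X_n)/n^{1+α} → 0` both `ℙ_x`-a.e.
and in `L¹(ℙ_x)`. -/
theorem stmt11 (M : MarkovChain X) (τ : (ℕ → X) → ℕ∞)
    (hst : IsPathStoppingTime τ) (hθ : ThetaCompatible M τ)
    (u : X → ℝ) (hu : IsDrift M τ u) (α : ℝ) (hα : 0 < α)
    (f : X → ℝ) (hf : MemWp (wE M u) 1 f) (x : X) :
    (∑' k : ℕ, (∫⁻ ω, ENNReal.ofReal |f (ω k)| ∂M.law x) /
        ENNReal.ofReal (((k : ℝ) + 1) ^ (1 + α))) ≠ ⊤ ∧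
    (∀ᵐ ω ∂M.law x,
      Tendsto (fun n : ℕ => f (ω n) / (n : ℝ) ^ (1 + α)) atTop (𝓝 0)) ∧
    Tendsto (fun n : ℕ => ∫ ω, |f (ω n) / (n : ℝ) ^ (1 + α)| ∂M.law x) atTop (𝓝 0) :=
  stmt11_general M τ u hu α hα f hf x

end
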